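/- Let E be an (a,b)-module of rank k ≥ 1 with ℂ⟦X⟧-basis (e₁,…,e_k) such that a eⱼ = λⱼ • (X • eⱼ) + S_{j−1} • e_{j−1} for all j ∈ {1,…,k}, where λ₁,…,λ_k ∈ ℂ, S₀ := 0 and S₁,…,S_{k−1} ∈ ℂ⟦X⟧. For j ∈ {1,…,k} let F_j be the ℂ⟦X⟧-span of e₁,…,e_j (so F_k = E), and for ν ∈ ℕ written as ν = n·k + h with n ∈ ℕ and 0 ≤ h ≤ k−1 define the ℂ-subspace Φ_ν := Xⁿ • F_{k−h} + X^{n+1} • E (the sharp filtration). Then: (i) the filtration is strictly decreasing, Φ₀ = E, and ⋂_{ν ∈ ℕ} Φ_ν = {0}; (ii) for each ν, the quotient Φ_ν ⧸ Φ_{ν+1} is a 1-dimensional ℂ-vector space generated by the image of Xⁿ • e_{k−h}; (iii) a(Φ_ν) ⊆ Φ_{ν+1} and X • Φ_ν ⊆ Φ_{ν+k} for all ν. -/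

import Mathlib

/-!
In coordinates for the basis (indexed from `0`), `Φ_ν` is the lattice of vectors whose `i`-th
coordinate is divisible by `X ^ ((ν + i) / k)`: for `ν = n k + h` this exponent is `n` on the
first `k - h` coordinates and `n + 1` on the others. Passing from `ν` to `ν + 1` raises exactly
one of these exponents by one, the one at `i = k - 1 - ν % k`, which gives the one-dimensional
quotients; passing to `ν + k` raises all of them, which is multiplication by `X`. The operator
`a` raises every exponent by one on the diagonal term `λᵢ X eᵢ` and, by the Leibniz rule, on
`X² S'`, while the off-diagonal term `Sᵢ₋₁ eᵢ₋₁` moves the `i`-th coordinate to position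
`i - 1`, whose exponent at `ν + 1` is the `i`-th one at `ν`.
-/

open PowerSeries Pointwise

namespace Nat

theorem add_div_eq_ite {k ν i : ℕ} (hk : 0 < k) (hi : i ≤ k) :
    (ν + i) / k = ν / k + if k ≤ ν % k + i then 1 else 0 := by
  have hr := Nat.mod_lt ν hk
  have hν : ν + i = k * (ν / k) + (ν % k + i) := by rw [← add_assoc, Nat.div_add_mod]
  rw [hν, Nat.mul_add_div hk]
  congr 1
  split_ifs with h
  · exact Nat.div_eq_of_lt_le (by omega) (by omega)
  · exact Nat.div_eq_of_lt (by omega)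

variable {k : ℕ} (ν : ℕ)

theorem succ_add_div_le (i : ℕ) : (ν + 1 + i) / k ≤ (ν + i) / k + 1 := by
  rw [Nat.add_right_comm, Nat.succ_div]
  split_ifs <;> omega

theorem add_sub_one_sub_mod_div (hk : 0 < k) : (ν + (k - 1 - ν % k)) / k = ν / k := by
  have := Nat.mod_lt ν hk
  rw [add_div_eq_ite hk (by omega), if_neg (by omega), add_zero]

theorem succ_add_sub_one_sub_mod_div (hk : 0 < k) :
    (ν + 1 + (k - 1 - ν % k)) / k = ν / k + 1 := by
  have := Nat.mod_lt ν hk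
  rw [add_assoc, add_div_eq_ite hk (by omega), if_pos (by omega)]

theorem succ_add_div_of_ne_sub_one_sub_mod (hk : 0 < k) {i : ℕ} (hi : i < k)
    (hne : i ≠ k - 1 - ν % k) : (ν + 1 + i) / k = (ν + i) / k := by
  have := Nat.mod_lt ν hk
  rw [add_assoc, add_div_eq_ite hk hi.le, add_div_eq_ite hk (by omega)]
  split_ifs <;> omega

end Nat

namespace PowerSeries

variable {K : Type*} [CommRing K]

theorem X_pow_succ_dvd_sub_C_coeff_mul {n : ℕ} {f : K⟦X⟧} (hf : X ^ n ∣ f) :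
    X ^ (n + 1) ∣ f - C (coeff n f) * X ^ n := by
  rw [X_pow_dvd_iff] at hf ⊢
  intro m hm
  rcases Nat.lt_or_eq_of_le (Nat.le_of_lt_succ hm) with hm | rfl
  · simp [coeff_X_pow, hf m hm, hm.ne]
  · simp

theorem X_pow_dvd_derivative {n : ℕ} {f : K⟦X⟧} (hf : X ^ n ∣ f) :
    X ^ (n - 1) ∣ d⁄dX K f := by
  rw [X_pow_dvd_iff] at hf ⊢
  intro m hm
  rw [coeff_derivative, hf (m + 1) (by omega), zero_mul]

theorem X_pow_succ_dvd_X_sq_mul_derivative {n : ℕ} {f : K⟦X⟧} (hf : X ^ n ∣ f) :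
    X ^ (n + 1) ∣ X ^ 2 * d⁄dX K f :=
  (pow_dvd_pow X (by omega : n + 1 ≤ 2 + (n - 1))).trans
    (pow_add (X : K⟦X⟧) 2 (n - 1) ▸ mul_dvd_mul_left _ (X_pow_dvd_derivative hf))

theorem eq_zero_of_forall_X_pow_dvd {f : K⟦X⟧} (hf : ∀ n, X ^ n ∣ f) : f = 0 := by
  ext m
  exact X_pow_dvd_iff.mp (hf (m + 1)) m m.lt_succ_self

theorem not_X_pow_succ_dvd_X_pow [Nontrivial K] (n : ℕ) : ¬ (X : K⟦X⟧) ^ (n + 1) ∣ X ^ n := by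
  intro h
  simpa using X_pow_dvd_iff.mp h n n.lt_succ_self

end PowerSeries

namespace Module.Basis

section CommRing

variable {ι R M : Type*} [CommRing R] [AddCommGroup M] [Module R M]

def powDvdSubmodule (b : Basis ι R M) (p : R) (d : ι → ℕ) : Submodule R M where
  carrier := {x | ∀ i, p ^ d i ∣ b.repr x i}
  add_mem' hx hy i := by simpa using dvd_add (hx i) (hy i)
  zero_mem' i := by simp
  smul_mem' c _ hx i := by simpa using (hx i).mul_left c

variable (b : Basis ι R M) (p : R) {d d' : ι → ℕ}

theorem powDvdSubmodule_anti (h : d ≤ d') : b.powDvdSubmodule p d' ≤ b.powDvdSubmodule p d :=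
  fun _ hx i => (pow_dvd_pow p (h i)).trans (hx i)

@[simp]
theorem powDvdSubmodule_zero : b.powDvdSubmodule p 0 = ⊤ :=
  eq_top_iff.mpr fun _ _ i => by simp

theorem smul_mem_powDvdSubmodule_iff {g : R} {j : ι} :
    g • b j ∈ b.powDvdSubmodule p d ↔ p ^ d j ∣ g := by
  classical
  refine ⟨fun h => by simpa using h j, fun h i => ?_⟩
  rcases eq_or_ne j i with rfl | hji
  · simpa using h
  · simp [hji]

theorem smul_mem_powDvdSubmodule_add_one {x : M} (hx : x ∈ b.powDvdSubmodule p d) :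
    p • x ∈ b.powDvdSubmodule p (d + 1) := fun i => by
  simpa [pow_succ, mul_comm p] using mul_dvd_mul_right (hx i) p

theorem pow_smul_span_sup_eq_powDvdSubmodule [Fintype ι] (s : Set ι) [DecidablePred (· ∈ s)]
    (n : ℕ) : p ^ n • Submodule.span R (b '' s) ⊔ p ^ (n + 1) • (⊤ : Submodule R M) =
      b.powDvdSubmodule p (fun i => n + if i ∈ s then 0 else 1) := by
  apply le_antisymm
  · refine sup_le ?_ ?_
    · rw [Submodule.pointwise_smul_def, Submodule.map_le_iff_le_comap, Submodule.span_le,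
        Set.image_subset_iff]
      intro i hi
      simp [smul_mem_powDvdSubmodule_iff, hi]
    · rintro _ ⟨y, -, rfl⟩ i
      simpa using (pow_dvd_pow p (by split_ifs <;> omega)).mul_right (b.repr y i)
  · intro x hx
    rw [← b.sum_repr x]
    refine Submodule.sum_mem _ fun i _ => ?_
    obtain ⟨u, hu⟩ := hx i
    by_cases hi : i ∈ s
    · refine Submodule.mem_sup_left (Submodule.mem_smul_pointwise_iff_exists _ _ _ |>.mpr
        ⟨u • b i, Submodule.smul_mem _ _ (Submodule.subset_span ⟨i, hi, rfl⟩), ?_⟩)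
      simp [hu, hi, smul_smul]
    · refine Submodule.mem_sup_right (Submodule.mem_smul_pointwise_iff_exists _ _ _ |>.mpr
        ⟨u • b i, Submodule.mem_top, ?_⟩)
      simp [hu, hi, smul_smul]

def sharpFiltration {k : ℕ} (e : Basis (Fin k) R M) (p : R) (ν : ℕ) : Submodule R M :=
  e.powDvdSubmodule p fun i => (ν + i) / k

variable {k : ℕ} (e : Basis (Fin k) R M)

theorem pow_div_smul_span_sup_eq_sharpFiltration (hk : 0 < k) (ν : ℕ) :
    p ^ (ν / k) • Submodule.span R (e '' {i | (i : ℕ) < k - ν % k}) ⊔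
        p ^ (ν / k + 1) • (⊤ : Submodule R M) = e.sharpFiltration p ν := by
  classical
  rw [pow_smul_span_sup_eq_powDvdSubmodule, sharpFiltration]
  congr with i
  rw [Nat.add_div_eq_ite hk i.isLt.le]
  simp only [Set.mem_ofPred_eq]
  split_ifs <;> omega

theorem sharpFiltration_succ_le (ν : ℕ) : e.sharpFiltration p (ν + 1) ≤ e.sharpFiltration p ν :=
  e.powDvdSubmodule_anti p fun _ => Nat.div_le_div_right (by omega)

@[simp]
theorem sharpFiltration_zero : e.sharpFiltration p 0 = ⊤ := by
  unfold sharpFiltration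
  convert e.powDvdSubmodule_zero p with i
  simp

theorem smul_mem_sharpFiltration_add (hk : 0 < k) {ν : ℕ} {x : M}
    (hx : x ∈ e.sharpFiltration p ν) : p • x ∈ e.sharpFiltration p (ν + k) := by
  unfold sharpFiltration at *
  convert e.smul_mem_powDvdSubmodule_add_one p hx using 2
  ext i
  rw [Nat.add_right_comm, Nat.add_div_right _ hk]
  rfl

theorem pow_smul_mem_sharpFiltration (hk : 0 < k) (ν : ℕ) :
    p ^ (ν / k) • e ⟨k - 1 - ν % k, by omega⟩ ∈ e.sharpFiltration p ν := by
  rw [sharpFiltration, smul_mem_powDvdSubmodule_iff, Nat.add_sub_one_sub_mod_div ν hk]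

end CommRing

section PowerSeries

variable {K E : Type*} [CommRing K] [AddCommGroup E] [Module K⟦X⟧ E]

theorem eq_zero_of_forall_mem_powDvdSubmodule {ι : Type*} (e : Basis ι K⟦X⟧ E) {x : E}
    (hx : ∀ n, x ∈ e.powDvdSubmodule X (fun _ => n)) : x = 0 :=
  e.repr.map_eq_zero_iff.mp <| Finsupp.ext fun i =>
    eq_zero_of_forall_X_pow_dvd fun n => hx n i

variable {k : ℕ} (e : Basis (Fin k) K⟦X⟧ E)

theorem iInf_sharpFiltration (hk : 0 < k) : ⨅ ν, e.sharpFiltration X ν = ⊥ := by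
  refine eq_bot_iff.mpr fun x hx => (Submodule.mem_bot _).mpr ?_
  refine e.eq_zero_of_forall_mem_powDvdSubmodule fun n => ?_
  refine e.powDvdSubmodule_anti X (fun i => ?_) (Submodule.mem_iInf _ |>.mp hx (n * k))
  exact (Nat.le_div_iff_mul_le hk).mpr (by omega)

theorem pow_smul_notMem_sharpFiltration_succ [Nontrivial K] (hk : 0 < k) (ν : ℕ) :
    (X : K⟦X⟧) ^ (ν / k) • e ⟨k - 1 - ν % k, by omega⟩ ∉ e.sharpFiltration X (ν + 1) := by
  rw [sharpFiltration, smul_mem_powDvdSubmodule_iff, Nat.succ_add_sub_one_sub_mod_div ν hk]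
  exact not_X_pow_succ_dvd_X_pow _

theorem sharpFiltration_succ_lt [Nontrivial K] (hk : 0 < k) (ν : ℕ) :
    e.sharpFiltration X (ν + 1) < e.sharpFiltration X ν :=
  lt_of_le_of_ne (e.sharpFiltration_succ_le X ν) fun h =>
    e.pow_smul_notMem_sharpFiltration_succ hk ν (h ▸ e.pow_smul_mem_sharpFiltration X hk ν)

variable [Module K E]

theorem map_mem_powDvdSubmodule_of_leibniz {ι : Type*} [Fintype ι] (b : Basis ι K⟦X⟧ E)
    {d d' : ι → ℕ} (a : E →ₗ[K] E)
    (ha : ∀ (S : K⟦X⟧) (x : E), a (S • x) = S • a x + ((X : K⟦X⟧) ^ 2 * d⁄dX K S) • x)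
    (hd : d' ≤ d + 1) (hab : ∀ i, (X : K⟦X⟧) ^ d i • a (b i) ∈ b.powDvdSubmodule X d')
    {x : E} (hx : x ∈ b.powDvdSubmodule X d) : a x ∈ b.powDvdSubmodule X d' := by
  rw [← b.sum_repr x, map_sum]
  refine Submodule.sum_mem _ fun i _ => ?_
  rw [ha]
  obtain ⟨u, hu⟩ := hx i
  refine Submodule.add_mem _ ?_ ?_
  · rw [hu, mul_comm, mul_smul]
    exact Submodule.smul_mem _ _ (hab i)
  · exact (b.smul_mem_powDvdSubmodule_iff X).mpr
      ((pow_dvd_pow X (hd i)).trans (X_pow_succ_dvd_X_sq_mul_derivative (hx i)))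

variable [IsScalarTower K K⟦X⟧ E]

theorem sub_smul_mem_powDvdSubmodule {ι : Type*} [DecidableEq ι] (b : Basis ι K⟦X⟧ E)
    {d : ι → ℕ} {x : E} (hx : x ∈ b.powDvdSubmodule X d) (j : ι) :
    x - coeff (d j) (b.repr x j) • ((X : K⟦X⟧) ^ d j • b j) ∈
      b.powDvdSubmodule X (Function.update d j (d j + 1)) := by
  intro i
  rw [← algebraMap_smul K⟦X⟧, smul_smul, ← C_eq_algebraMap]
  rcases eq_or_ne i j with rfl | hij
  · simpa using X_pow_succ_dvd_sub_C_coeff_mul (hx i)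
  · simpa [hij, Ne.symm hij] using hx i

theorem exists_sub_smul_mem_sharpFiltration_succ (hk : 0 < k) {ν : ℕ} {x : E}
    (hx : x ∈ e.sharpFiltration X ν) : ∃ c : K,
      x - c • ((X : K⟦X⟧) ^ (ν / k) • e ⟨k - 1 - ν % k, by omega⟩) ∈
        e.sharpFiltration X (ν + 1) := by
  have h := e.sub_smul_mem_powDvdSubmodule hx ⟨k - 1 - ν % k, by omega⟩
  simp only [Nat.add_sub_one_sub_mod_div ν hk] at h
  refine ⟨_, e.powDvdSubmodule_anti X (fun i => ?_) h⟩
  rcases eq_or_ne i ⟨k - 1 - ν % k, by omega⟩ with rfl | hi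
  · simp [Nat.succ_add_sub_one_sub_mod_div ν hk]
  · rw [Function.update_of_ne hi,
      Nat.succ_add_div_of_ne_sub_one_sub_mod ν hk i.isLt fun h => hi (Fin.ext h)]

theorem map_mem_sharpFiltration_succ (hk : 0 < k) (a : E →ₗ[K] E)
    (ha : ∀ (S : K⟦X⟧) (x : E), a (S • x) = S • a x + ((X : K⟦X⟧) ^ 2 * d⁄dX K S) • x)
    (lam : Fin k → K) (S : Fin k → K⟦X⟧)
    (he0 : a (e ⟨0, hk⟩) = lam ⟨0, hk⟩ • ((X : K⟦X⟧) • e ⟨0, hk⟩))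
    (heS : ∀ (j : ℕ) (h : j + 1 < k),
      a (e ⟨j + 1, h⟩) =
        lam ⟨j + 1, h⟩ • ((X : K⟦X⟧) • e ⟨j + 1, h⟩) +
          S ⟨j, Nat.lt_of_succ_lt h⟩ • e ⟨j, Nat.lt_of_succ_lt h⟩)
    {ν : ℕ} {x : E} (hx : x ∈ e.sharpFiltration X ν) : a x ∈ e.sharpFiltration X (ν + 1) := by
  refine e.map_mem_powDvdSubmodule_of_leibniz a ha (fun i => Nat.succ_add_div_le ν i)
    (fun i => ?_) hx
  have diagonal (i : Fin k) (c : K) :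
      (X : K⟦X⟧) ^ ((ν + i) / k) • c • ((X : K⟦X⟧) • e i) ∈ e.sharpFiltration X (ν + 1) := by
    rw [smul_comm, smul_smul, ← pow_succ]
    exact Submodule.smul_of_tower_mem _ c ((e.smul_mem_powDvdSubmodule_iff X).mpr
      (pow_dvd_pow X (Nat.succ_add_div_le ν i)))
  obtain ⟨_ | j, hi⟩ := i
  · rw [he0]
    exact diagonal _ _
  · rw [heS j hi, smul_add, smul_smul]
    refine Submodule.add_mem _ (diagonal _ _) ((e.smul_mem_powDvdSubmodule_iff X).mpr ?_)
    rw [add_assoc, add_comm 1 j]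
    exact dvd_mul_right _ _

end PowerSeries

end Module.Basis

/-- Basic properties of the sharp filtration
`Φ_{n·k+h} := Xⁿ • F_{k-h} + X^{n+1} • E` of a rank-`k` fresco with basis
`(e₁,…,e_k)`, `a eⱼ = λⱼ • (X • eⱼ) + S_{j-1} • e_{j-1}`:
it is strictly decreasing with `Φ₀ = E` and trivial intersection, each quotient
`Φ_ν/Φ_{ν+1}` is a 1-dimensional `ℂ`-vector space generated by the image of
`Xⁿ • e_{k-h}`, and `a Φ_ν ⊆ Φ_{ν+1}`, `X • Φ_ν ⊆ Φ_{ν+k}`. -/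
theorem stmt16 (k : ℕ) (hk : 1 ≤ k)
    (E : Type*) [AddCommGroup E] [Module ℂ E]
    [Module (PowerSeries ℂ) E] [IsScalarTower ℂ (PowerSeries ℂ) E]
    (a : E →ₗ[ℂ] E)
    (ha : ∀ (S : PowerSeries ℂ) (x : E),
      a (S • x) = S • a x + ((X : PowerSeries ℂ) ^ 2 * derivative ℂ S) • x)
    (lam : Fin k → ℂ) (S : Fin k → PowerSeries ℂ)
    (e : Module.Basis (Fin k) (PowerSeries ℂ) E)
    (he0 : a (e ⟨0, by omega⟩) =
      lam ⟨0, by omega⟩ • ((X : PowerSeries ℂ) • e ⟨0, by omega⟩))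
    (heS : ∀ (j : ℕ) (h : j + 1 < k),
      a (e ⟨j + 1, h⟩) =
        lam ⟨j + 1, h⟩ • ((X : PowerSeries ℂ) • e ⟨j + 1, h⟩)
          + S ⟨j, by omega⟩ • e ⟨j, by omega⟩)
    (F : ℕ → Submodule (PowerSeries ℂ) E)
    (hF : ∀ m : ℕ, F m =
      Submodule.span (PowerSeries ℂ) (e '' {i : Fin k | (i : ℕ) < m}))
    (Phi : ℕ → Submodule (PowerSeries ℂ) E)
    (hPhi : ∀ ν : ℕ, Phi ν =
      ((X : PowerSeries ℂ) ^ (ν / k) • F (k - ν % k)) ⊔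
        ((X : PowerSeries ℂ) ^ (ν / k + 1) • (⊤ : Submodule (PowerSeries ℂ) E))) :
    -- (i) strictly decreasing, `Φ₀ = E`, trivial intersection
    ((∀ ν : ℕ, Phi (ν + 1) < Phi ν) ∧ Phi 0 = ⊤ ∧ (⨅ ν : ℕ, Phi ν) = ⊥)
    ∧
    -- (ii) `Φ_ν/Φ_{ν+1}` is one-dimensional, generated by the image of
    -- `X^{ν/k} • e_{k - ν % k}`
    (∀ ν : ℕ,
      ((X : PowerSeries ℂ) ^ (ν / k)) • e ⟨k - 1 - ν % k, by omega⟩ ∈ Phi ν ∧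
      ((X : PowerSeries ℂ) ^ (ν / k)) • e ⟨k - 1 - ν % k, by omega⟩ ∉ Phi (ν + 1) ∧
      (∀ x ∈ Phi ν, ∃ c : ℂ,
        x - c • (((X : PowerSeries ℂ) ^ (ν / k)) • e ⟨k - 1 - ν % k, by omega⟩)
          ∈ Phi (ν + 1)))
    ∧
    -- (iii) `a Φ_ν ⊆ Φ_{ν+1}` and `X • Φ_ν ⊆ Φ_{ν+k}`
    (∀ ν : ℕ, (∀ x ∈ Phi ν, a x ∈ Phi (ν + 1)) ∧
      (∀ x ∈ Phi ν, (X : PowerSeries ℂ) • x ∈ Phi (ν + k))) := by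
  have hPhi' (ν : ℕ) : Phi ν = e.sharpFiltration X ν := by
    rw [hPhi, hF, e.pow_div_smul_span_sup_eq_sharpFiltration X hk]
  simp only [hPhi']
  exact ⟨⟨e.sharpFiltration_succ_lt hk, e.sharpFiltration_zero X, e.iInf_sharpFiltration hk⟩,
    fun ν => ⟨e.pow_smul_mem_sharpFiltration X hk ν, e.pow_smul_notMem_sharpFiltration_succ hk ν,
      fun _ => e.exists_sub_smul_mem_sharpFiltration_succ hk⟩,
    fun ν => ⟨fun _ => e.map_mem_sharpFiltration_succ hk a ha lam S he0 heS,
      fun _ => e.smul_mem_sharpFiltration_add X hk⟩⟩
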